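/- arXiv:2602.13552 — 3 statements merged into one kernel-verified Lean document; each statement's English description precedes it below -/
import Mathlib

section
/- Let R be a commutative ring, M a b×a matrix over R with a + d = b, and let N = R^b / (column span of M) be the cokernel of M, with projection π : R^b → N. Then there is a well-defined alternating R-multilinear map A : N^d → R satisfying A(π(u_1), ..., π(u_d)) = det [M | u_1 ⋯ u_d] for all u_1, ..., u_d ∈ R^b, where [M | u_1 ⋯ u_d] is the square matrix obtained by appending the columns u_i to M. -/
/-!
The appended determinant is alternating multilinear in `u`, and it vanishes as soon as some
`u j` lies in the range of `M`, since that column is then a linear combination of the columns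
of `M`. Expanding multilinearly, it therefore depends only on the classes of the `u j` modulo
the range, so it descends to the cokernel.
-/
/-- The square `b × b` matrix whose first `a` columns are the columns of `M`
and whose last `d` columns are `u 0, …, u (d-1)`. -/
def appendedCols {R : Type*} [CommRing R] {a b d : ℕ} (h : a + d = b)
    (M : Matrix (Fin b) (Fin a) R) (u : Fin d → Fin b → R) :
    Matrix (Fin b) (Fin b) R :=
  Matrix.of fun i j =>
    Sum.elim (fun ja => M i ja) (fun jd => u jd i)
      ((finSumFinEquiv.trans (finCongr h)).symm j)

namespace AlternatingMap

variable {R M N ι : Type*} [CommRing R] [AddCommGroup M] [Module R M] [AddCommGroup N]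
  [Module R N] [Fintype ι] (f : M [⋀^ι]→ₗ[R] N) (W : Submodule R M)

/-- Expanding `f (u + (v - u))` multilinearly, every term but `f u` has an argument in `W`. -/
theorem map_eq_of_sub_mem (hf : ∀ v i, v i ∈ W → f v = 0) {u v : ι → M}
    (huv : ∀ i, v i - u i ∈ W) : f v = f u := by
  classical
  have hsplit : v = u + (v - u) := by abel
  rw [hsplit, map_add_univ, Finset.sum_eq_single Finset.univ]
  · rw [Finset.piecewise_univ]
  · intro s _ hs
    obtain ⟨i, hi⟩ := not_forall.mp (mt Finset.eq_univ_of_forall hs)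
    exact hf _ i (by simpa [Finset.piecewise_eq_of_notMem _ _ _ hi] using huv i)
  · simp

theorem map_surjInv_mkQ_comp (hf : ∀ v i, v i ∈ W → f v = 0) (v : ι → M) :
    f (Function.surjInv W.mkQ_surjective ∘ W.mkQ ∘ v) = f v :=
  f.map_eq_of_sub_mem W hf fun _ =>
    (Submodule.Quotient.eq W).mp (Function.surjInv_eq W.mkQ_surjective _)

noncomputable def liftQ (hf : ∀ v i, v i ∈ W → f v = 0) : (M ⧸ W) [⋀^ι]→ₗ[R] N where
  toFun x := f (Function.surjInv W.mkQ_surjective ∘ x)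
  map_update_add' x i p q := by
    obtain ⟨u, rfl⟩ := W.mkQ_surjective.comp_left x
    obtain ⟨p, rfl⟩ := W.mkQ_surjective p
    obtain ⟨q, rfl⟩ := W.mkQ_surjective q
    simp only [← map_add, ← Function.comp_update, f.map_surjInv_mkQ_comp W hf, f.map_update_add]
  map_update_smul' x i c p := by
    obtain ⟨u, rfl⟩ := W.mkQ_surjective.comp_left x
    obtain ⟨p, rfl⟩ := W.mkQ_surjective p
    simp only [← map_smul, ← Function.comp_update, f.map_surjInv_mkQ_comp W hf,
      f.map_update_smul]
  map_eq_zero_of_eq' x _ _ hij hne :=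
    f.map_eq_zero_of_eq _ (congrArg (Function.surjInv _) hij) hne

theorem liftQ_mkQ (hf : ∀ v i, v i ∈ W → f v = 0) (v : ι → M) :
    f.liftQ W hf (fun i => W.mkQ (v i)) = f v :=
  f.map_surjInv_mkQ_comp W hf v

end AlternatingMap

namespace Matrix

variable {R : Type*} [CommRing R] {a b d : ℕ} (h : a + d = b) (M : Matrix (Fin b) (Fin a) R)

def appendedColsIndex : Fin a ⊕ Fin d ≃ Fin b := finSumFinEquiv.trans (finCongr h)

@[simp]
theorem appendedCols_apply_inl (u : Fin d → Fin b → R) (i : Fin b) (j : Fin a) :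
    appendedCols h M u i (appendedColsIndex h (.inl j)) = M i j := by
  simp [appendedCols, appendedColsIndex]

@[simp]
theorem appendedCols_apply_inr (u : Fin d → Fin b → R) (i : Fin b) (j : Fin d) :
    appendedCols h M u i (appendedColsIndex h (.inr j)) = u j i := by
  simp [appendedCols, appendedColsIndex]

theorem appendedCols_update [DecidableEq (Fin d)] (u : Fin d → Fin b → R) (j : Fin d)
    (x : Fin b → R) :
    appendedCols h M (Function.update u j x)
      = (appendedCols h M u).updateCol (appendedColsIndex h (.inr j)) x := by
  ext i k
  obtain ⟨k | k, rfl⟩ := (appendedColsIndex h).surjective k <;>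
    simp [updateCol_apply, Function.update_apply, ite_apply]

def appendedColsDet : (Fin b → R) [⋀^Fin d]→ₗ[R] R where
  toFun u := (appendedCols h M u).det
  map_update_add' u j x y := by
    simp only [appendedCols_update, det_updateCol_add]
  map_update_smul' u j c x := by
    simp only [appendedCols_update, det_updateCol_smul, smul_eq_mul]
  map_eq_zero_of_eq' u i j hij hne :=
    det_zero_of_column_eq (i := appendedColsIndex h (.inr i)) (j := appendedColsIndex h (.inr j))
      (by simpa using hne) fun k => by simp [hij]

theorem appendedColsDet_apply (u : Fin d → Fin b → R) :
    appendedColsDet h M u = (appendedCols h M u).det := rfl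

theorem appendedColsDet_eq_zero_of_mem_range {v : Fin d → Fin b → R} {i : Fin d}
    (hv : v i ∈ LinearMap.range M.mulVecLin) : appendedColsDet h M v = 0 := by
  classical
  obtain ⟨c, hc⟩ := hv
  set A := appendedCols h M v
  -- `c` extended by zero: `det_updateCol_sum` then multiplies the determinant by `c' (inr i) = 0`.
  let c' : Fin b → R := fun k => Sum.elim c 0 ((appendedColsIndex h).symm k)
  have hcol : v i = fun k => ∑ l, c' l • A k l := by
    ext k
    simp [← hc, ← (appendedColsIndex h).sum_comp, Fintype.sum_sum_type, c', A, mulVec,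
      dotProduct, mul_comm]
  have := det_updateCol_sum A (appendedColsIndex h (.inr i)) c'
  rw [← hcol, ← appendedCols_update, Function.update_eq_self] at this
  simpa [c', appendedColsDet_apply] using this

end Matrix

/-- There is a well-defined alternating `R`-multilinear map on the cokernel of `M`
computing the appended determinant. -/
theorem exists_alternating_alexanderFunction {R : Type*} [CommRing R] {a b d : ℕ}
    (h : a + d = b) (M : Matrix (Fin b) (Fin a) R) :
    ∃ A : AlternatingMap R ((Fin b → R) ⧸ LinearMap.range M.mulVecLin) R (Fin d),
      ∀ u : Fin d → (Fin b → R),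
        A (fun j => Submodule.mkQ (LinearMap.range M.mulVecLin) (u j))
          = (appendedCols h M u).det :=
  ⟨(Matrix.appendedColsDet h M).liftQ _ fun _ _ hv =>
      Matrix.appendedColsDet_eq_zero_of_mem_range h M hv,
    fun u => (Matrix.appendedColsDet h M).liftQ_mkQ _ _ u⟩
end

section
/- Let R be a commutative ring, N an R-module, and d ≥ 0. Suppose N admits two injective free presentations: exact sequences 0 → R^a →^{M} R^b →^{π} N → 0 and 0 → R^{a'} →^{M'} R^{b'} →^{π'} N → 0 with b − a = b' − a' = d. Then there exists a unit u ∈ Rˣ such that for all u_1, ..., u_d ∈ R^b and w_1, ..., w_d ∈ R^{b'} satisfying π(u_i) = π'(w_i) for each i, one has det [M' | w_1 ⋯ w_d] = u · det [M | u_1 ⋯ u_d]. -/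
def Equiv.sumCongrSumComm {α β γ : Type*} (e : α ≃ β ⊕ γ) (α' : Type*) :
    α ⊕ α' ≃ (β ⊕ α') ⊕ γ :=
  (e.sumCongr (Equiv.refl α')).trans <| (Equiv.sumAssoc β γ α').trans <|
    ((Equiv.refl β).sumCongr (Equiv.sumComm γ α')).trans (Equiv.sumAssoc β α' γ).symm

def LinearMap.sumArrowCoprod {R ι ι' N : Type*} [CommRing R] [AddCommGroup N] [Module R N]
    (π : (ι → R) →ₗ[R] N) (π' : (ι' → R) →ₗ[R] N) : (ι ⊕ ι' → R) →ₗ[R] N :=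
  π ∘ₗ funLeft R R Sum.inl + π' ∘ₗ funLeft R R Sum.inr

@[simp]
theorem LinearMap.sumArrowCoprod_apply {R ι ι' N : Type*} [CommRing R] [AddCommGroup N]
    [Module R N] (π : (ι → R) →ₗ[R] N) (π' : (ι' → R) →ₗ[R] N) (z : ι ⊕ ι' → R) :
    π.sumArrowCoprod π' z = π (z ∘ Sum.inl) + π' (z ∘ Sum.inr) :=
  rfl

namespace Matrix

variable {R : Type*} [CommRing R] {ι ι' κ κ' δ : Type*} {N : Type*} [AddCommGroup N] [Module R N]

theorem det_submatrix_id_mul [Fintype ι] [DecidableEq ι] [Fintype κ'] (X : Matrix ι κ' R)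
    (Y : Matrix κ' κ R) (e : ι ≃ κ) (e' : ι ≃ κ') :
    ((X * Y).submatrix id e).det = (X.submatrix id e').det * (Y.submatrix e' e).det := by
  rw [← det_mul, submatrix_mul_equiv]

def appendedDet [Fintype ι] [DecidableEq ι] (e : ι ≃ κ ⊕ δ) (M : Matrix ι κ R)
    (U : Matrix ι δ R) : R :=
  ((fromCols M U).submatrix id e).det

section AppendedDet

variable [Fintype ι] [DecidableEq ι]

theorem appendedDet_reindex_left [Fintype ι'] [DecidableEq ι'] (σ : ι ≃ ι') (e : ι ≃ κ ⊕ δ)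
    (M : Matrix ι κ R) (U : Matrix ι δ R) :
    appendedDet (σ.symm.trans e) (reindex σ (Equiv.refl κ) M) (reindex σ (Equiv.refl δ) U) =
      appendedDet e M U := by
  rw [appendedDet, appendedDet, ← det_submatrix_equiv_self σ.symm]
  congr 1

theorem appendedDet_fromBlocks_zero_one [Fintype ι'] [DecidableEq ι'] (e : ι ≃ κ ⊕ δ)
    (M : Matrix ι κ R) (B : Matrix ι ι' R) (U : Matrix ι δ R) :
    appendedDet (e.sumCongrSumComm ι') (fromBlocks M B 0 1) (fromRows U 0) =
      appendedDet e M U := by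
  have hblocks : (fromCols (fromBlocks M B 0 (1 : Matrix ι' ι' R)) (fromRows U 0)).submatrix id
      (e.sumCongrSumComm ι') = fromBlocks ((fromCols M U).submatrix id e) B 0 1 := by
    ext (i | i) j <;> obtain ⟨(k | k) | k, rfl⟩ := (e.sumCongrSumComm ι').symm.surjective j <;>
      simp [Equiv.sumCongrSumComm]
  rw [appendedDet, hblocks, det_fromBlocks_zero₂₁, det_one, mul_one, appendedDet]

variable [Fintype κ] [DecidableEq κ] [Fintype δ] [DecidableEq δ]

theorem appendedDet_add_mul (e : ι ≃ κ ⊕ δ) (M : Matrix ι κ R) (U : Matrix ι δ R)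
    (C : Matrix κ δ R) : appendedDet e M (U + M * C) = appendedDet e M U := by
  have hcols : fromCols M (U + M * C) =
      fromCols M U * (fromBlocks 1 C 0 1 : Matrix (κ ⊕ δ) (κ ⊕ δ) R) := by
    simp [fromCols_mul_fromBlocks, add_comm]
  rw [appendedDet, hcols, det_submatrix_id_mul _ _ e e, det_submatrix_equiv_self,
    det_fromBlocks_zero₂₁, det_one, det_one, mul_one, mul_one, appendedDet]

theorem appendedDet_eq_of_exact {M : Matrix ι κ R} {π : (ι → R) →ₗ[R] N}
    (hM : Function.Exact M.mulVecLin π) (e : ι ≃ κ ⊕ δ) {U U' : Matrix ι δ R}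
    (hU : ∀ k, π (Uᵀ k) = π (U'ᵀ k)) : appendedDet e M U' = appendedDet e M U := by
  choose c hc using fun k => (hM (U'ᵀ k - Uᵀ k)).mp (by simp [hU k])
  have hU' : U' = U + M * (of c)ᵀ := by
    ext i k
    have := congrFun (hc k) i
    simp only [mulVecLin_apply, mulVec, dotProduct] at this
    simp [mul_apply, this]
  rw [hU', appendedDet_add_mul]

end AppendedDet

theorem exists_mul_eq_of_range_mulVecLin_eq [Fintype κ] [DecidableEq κ] [Fintype κ']
    [DecidableEq κ'] {M : Matrix ι κ R} {M' : Matrix ι κ' R}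
    (hM : Function.Injective M.mulVecLin) (hM' : Function.Injective M'.mulVecLin)
    (hr : LinearMap.range M.mulVecLin = LinearMap.range M'.mulVecLin) :
    ∃ (P : Matrix κ' κ R) (Q : Matrix κ κ' R), P * Q = 1 ∧ M' * P = M := by
  let φ : (κ → R) ≃ₗ[R] (κ' → R) := LinearEquiv.ofInjective _ hM ≪≫ₗ
    LinearEquiv.ofEq _ _ hr ≪≫ₗ (LinearEquiv.ofInjective _ hM').symm
  have hφ (x : κ → R) : M' *ᵥ φ x = M *ᵥ x := by
    change ((LinearEquiv.ofInjective _ hM') (φ x) : ι → R) = M.mulVecLin x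
    simp [φ]
  refine ⟨LinearMap.toMatrix' φ.toLinearMap, LinearMap.toMatrix' φ.symm.toLinearMap, ?_, ?_⟩
  · rw [← LinearMap.toMatrix'_comp, φ.comp_symm, LinearMap.toMatrix'_id]
  · apply toLin'.injective
    refine LinearMap.ext fun x => ?_
    simp [toLin'_mul, hφ]

theorem exists_unit_appendedDet_eq_of_range_eq [Fintype ι] [DecidableEq ι] [Fintype κ]
    [DecidableEq κ] [Fintype κ'] [DecidableEq κ'] [Fintype δ] [DecidableEq δ]
    {M : Matrix ι κ R} {M' : Matrix ι κ' R}
    (hM : Function.Injective M.mulVecLin) (hM' : Function.Injective M'.mulVecLin)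
    (hr : LinearMap.range M.mulVecLin = LinearMap.range M'.mulVecLin)
    (e : ι ≃ κ ⊕ δ) (e' : ι ≃ κ' ⊕ δ) :
    ∃ u : Rˣ, ∀ U : Matrix ι δ R, appendedDet e M U = u * appendedDet e' M' U := by
  obtain ⟨P, Q, hPQ, hP⟩ := exists_mul_eq_of_range_mulVecLin_eq hM hM' hr
  let T : Matrix (κ' ⊕ δ) (κ ⊕ δ) R := fromBlocks P 0 0 1
  have hT : IsUnit (T.submatrix e' e).det := by
    refine IsUnit.of_mul_eq_one
      ((fromBlocks Q 0 0 1 : Matrix (κ ⊕ δ) (κ' ⊕ δ) R).submatrix e e').det ?_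
    rw [← det_mul, submatrix_mul_equiv, fromBlocks_multiply]
    simp [hPQ]
  refine ⟨hT.unit, fun U => ?_⟩
  have hcols : fromCols M U = fromCols M' U * T := by
    simp [T, fromCols_mul_fromBlocks, hP]
  rw [appendedDet, hcols, det_submatrix_id_mul _ _ e e', IsUnit.unit_spec, mul_comm, appendedDet]

theorem exists_mulVecLin_lift [Fintype ι'] [DecidableEq ι'] {π : (ι → R) →ₗ[R] N}
    (hπ : Function.Surjective π) (π' : (ι' → R) →ₗ[R] N) :
    ∃ f : Matrix ι ι' R, π ∘ₗ f.mulVecLin = π' := by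
  obtain ⟨g, hg⟩ := Module.projective_lifting_property π π' hπ
  exact ⟨LinearMap.toMatrix' g, by rwa [← toLin'_apply', toLin'_toMatrix']⟩

theorem injective_mulVecLin_reindex_left [Fintype κ] {A : Matrix ι κ R}
    (hA : Function.Injective A.mulVecLin) (σ : ι ≃ ι') :
    Function.Injective (reindex σ (Equiv.refl κ) A).mulVecLin := by
  rw [mulVecLin_reindex]
  simpa using hA

theorem exact_mulVecLin_reindex_left [Fintype κ] {A : Matrix ι κ R} {π : (ι → R) →ₗ[R] N}
    (hA : Function.Exact A.mulVecLin π) (σ : ι ≃ ι') :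
    Function.Exact (reindex σ (Equiv.refl κ) A).mulVecLin
      (π ∘ₗ (LinearEquiv.funCongrLeft R R σ).toLinearMap) := by
  rw [mulVecLin_reindex]
  simpa using (LinearEquiv.conj_exact_iff_exact _ _ (LinearEquiv.funCongrLeft R R σ.symm)).mpr hA

section Stabilization

variable [Fintype ι'] [DecidableEq ι'] [Fintype κ]

theorem injective_mulVecLin_fromBlocks_zero_one {M : Matrix ι κ R}
    (hM : Function.Injective M.mulVecLin) (B : Matrix ι ι' R) :
    Function.Injective (fromBlocks M B 0 (1 : Matrix ι' ι' R)).mulVecLin := by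
  refine (injective_iff_map_eq_zero _).mpr fun w hw => ?_
  have hr : w ∘ Sum.inr = 0 := by simpa [fromBlocks_mulVec] using congrArg (· ∘ Sum.inr) hw
  have hl : w ∘ Sum.inl = 0 := hM <| by
    simpa [fromBlocks_mulVec, hr] using congrArg (· ∘ Sum.inl) hw
  ext (i | i)
  · exact congrFun hl i
  · exact congrFun hr i

theorem exact_mulVecLin_fromBlocks_neg_zero_one {M : Matrix ι κ R} {π : (ι → R) →ₗ[R] N}
    (hM : Function.Exact M.mulVecLin π) {f : Matrix ι ι' R} {π' : (ι' → R) →ₗ[R] N}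
    (hf : π ∘ₗ f.mulVecLin = π') :
    Function.Exact (fromBlocks M (-f) 0 (1 : Matrix ι' ι' R)).mulVecLin
      (π.sumArrowCoprod π') := by
  intro z
  have hz : π.sumArrowCoprod π' z = π (z ∘ Sum.inl + f *ᵥ (z ∘ Sum.inr)) := by
    simp [← hf]
  rw [hz, hM]
  constructor
  · rintro ⟨x, hx : M *ᵥ x = _⟩
    refine ⟨Sum.elim x (z ∘ Sum.inr), ?_⟩
    ext (i | i) <;> simp [fromBlocks_mulVec, hx, neg_mulVec]
  · rintro ⟨w, rfl⟩
    exact ⟨w ∘ Sum.inl, by simp [fromBlocks_mulVec, neg_mulVec]⟩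

variable [Fintype ι] [DecidableEq ι]

theorem exists_stabilization_left {M : Matrix ι κ R} {π : (ι → R) →ₗ[R] N}
    (hπ : Function.Surjective π) (hMinj : Function.Injective M.mulVecLin)
    (hM : Function.Exact M.mulVecLin π) (π' : (ι' → R) →ₗ[R] N) (e : ι ≃ κ ⊕ δ) :
    ∃ A : Matrix (ι ⊕ ι') (κ ⊕ ι') R, Function.Injective A.mulVecLin ∧
      Function.Exact A.mulVecLin (π.sumArrowCoprod π') ∧
      ∀ U, appendedDet (e.sumCongrSumComm ι') A (fromRows U 0) = appendedDet e M U := by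
  obtain ⟨f, hf⟩ := exists_mulVecLin_lift hπ π'
  exact ⟨fromBlocks M (-f) 0 1, injective_mulVecLin_fromBlocks_zero_one hMinj _,
    exact_mulVecLin_fromBlocks_neg_zero_one hM hf, appendedDet_fromBlocks_zero_one e M (-f)⟩

theorem exists_stabilization_right {M' : Matrix ι' κ R} {π' : (ι' → R) →ₗ[R] N}
    (hπ' : Function.Surjective π') (hM'inj : Function.Injective M'.mulVecLin)
    (hM' : Function.Exact M'.mulVecLin π') (π : (ι → R) →ₗ[R] N) (e' : ι' ≃ κ ⊕ δ) :
    ∃ A : Matrix (ι ⊕ ι') (κ ⊕ ι) R, Function.Injective A.mulVecLin ∧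
      Function.Exact A.mulVecLin (π.sumArrowCoprod π') ∧
      ∀ W, appendedDet ((Equiv.sumComm ι' ι).symm.trans (e'.sumCongrSumComm ι)) A (fromRows 0 W) =
        appendedDet e' M' W := by
  obtain ⟨A, hAinj, hA, hAdet⟩ := exists_stabilization_left hπ' hM'inj hM' π e'
  refine ⟨reindex (Equiv.sumComm ι' ι) (Equiv.refl _) A,
    injective_mulVecLin_reindex_left hAinj _, ?_, fun W => ?_⟩
  · convert exact_mulVecLin_reindex_left hA (Equiv.sumComm ι' ι) using 1
    ext z
    exact add_comm _ _
  · rw [← hAdet, ← appendedDet_reindex_left (Equiv.sumComm ι' ι)]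
    congr 1
    ext (i | i) k <;> rfl

end Stabilization

theorem exists_unit_appendedDet_eq [Fintype ι] [DecidableEq ι] [Fintype ι'] [DecidableEq ι']
    [Fintype κ] [DecidableEq κ] [Fintype κ'] [DecidableEq κ'] [Fintype δ] [DecidableEq δ]
    {M : Matrix ι κ R} {M' : Matrix ι' κ' R} {π : (ι → R) →ₗ[R] N} {π' : (ι' → R) →ₗ[R] N}
    (hπ : Function.Surjective π) (hπ' : Function.Surjective π')
    (hMinj : Function.Injective M.mulVecLin) (hM'inj : Function.Injective M'.mulVecLin)
    (hM : Function.Exact M.mulVecLin π) (hM' : Function.Exact M'.mulVecLin π')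
    (e : ι ≃ κ ⊕ δ) (e' : ι' ≃ κ' ⊕ δ) :
    ∃ u : Rˣ, ∀ U W, (∀ k, π (Uᵀ k) = π' (Wᵀ k)) →
      appendedDet e' M' W = u * appendedDet e M U := by
  obtain ⟨A, hAinj, hA, hAdet⟩ := exists_stabilization_left hπ hMinj hM π' e
  obtain ⟨A', hA'inj, hA', hA'det⟩ := exists_stabilization_right hπ' hM'inj hM' π e'
  obtain ⟨u, hu⟩ := exists_unit_appendedDet_eq_of_range_eq hA'inj hAinj
    (hA'.linearMap_ker_eq.symm.trans hA.linearMap_ker_eq) _ (e.sumCongrSumComm ι')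
  refine ⟨u, fun U W hUW => ?_⟩
  rw [← hAdet, ← hA'det, hu, appendedDet_eq_of_exact hA]
  intro k
  change π (Uᵀ k) + π' 0 = π 0 + π' (Wᵀ k)
  simp [hUW k]

end Matrix

open Matrix

theorem det_appendedCols {R : Type*} [CommRing R] {a b d : ℕ} (h : a + d = b)
    (M : Matrix (Fin b) (Fin a) R) (u : Fin d → Fin b → R) :
    (appendedCols h M u).det =
      appendedDet (finSumFinEquiv.trans (finCongr h)).symm M (of u)ᵀ :=
  rfl

/-- The Alexander function of a deficiency-`d` presented module is well defined up to
a unit: for two injective free presentations of the same module `N`, the appended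
determinants agree up to a single unit independent of the chosen vectors. -/
theorem alexanderFunction_welldefined_up_to_unit {R : Type*} [CommRing R]
    {N : Type*} [AddCommGroup N] [Module R N]
    {a b a' b' d : ℕ} (h : a + d = b) (h' : a' + d = b')
    (M : Matrix (Fin b) (Fin a) R) (M' : Matrix (Fin b') (Fin a') R)
    (π : (Fin b → R) →ₗ[R] N) (π' : (Fin b' → R) →ₗ[R] N)
    (hπ : Function.Surjective π) (hπ' : Function.Surjective π')
    (hMinj : Function.Injective M.mulVecLin)
    (hM'inj : Function.Injective M'.mulVecLin)
    (hM : LinearMap.range M.mulVecLin = LinearMap.ker π)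
    (hM' : LinearMap.range M'.mulVecLin = LinearMap.ker π') :
    ∃ u : Rˣ, ∀ (us : Fin d → Fin b → R) (ws : Fin d → Fin b' → R),
      (∀ i, π (us i) = π' (ws i)) →
      (appendedCols h' M' ws).det = (u : R) * (appendedCols h M us).det := by
  obtain ⟨u, hu⟩ := exists_unit_appendedDet_eq hπ hπ' hMinj hM'inj
    (LinearMap.exact_iff.mpr hM.symm) (LinearMap.exact_iff.mpr hM'.symm)
    (finSumFinEquiv.trans (finCongr h)).symm (finSumFinEquiv.trans (finCongr h')).symm
  exact ⟨u, fun us ws hmatch => by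
    simpa only [det_appendedCols] using hu (of us)ᵀ (of ws)ᵀ hmatch⟩
end

section
/- Let R be a nontrivial commutative ring, V a free R-module of rank n, and 0 ≤ k ≤ n. The wedge product induces a perfect pairing between the k-th and (n−k)-th exterior powers: the R-linear map Λ^k V → Hom_R(Λ^{n−k} V, Λ^n V) sending x to (y ↦ x ∧ y) is an isomorphism of R-modules. -/
/-!
The wedge products `e_s = b_{s₁} ∧ ⋯ ∧ b_{sₖ}` over `k`-subsets `s` form a basis of `Λ^k V`.
For `|s| = k` and `|t| = n - k` one has `e_s ∧ e_t = 0` unless `t = sᶜ`, while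
`e_s ∧ e_{sᶜ} = ±e`, where `e = b₁ ∧ ⋯ ∧ bₙ` spans `Λ^n V`. So the pairing map sends `e_s` to
`±` the elementary map `e_{sᶜ} ↦ e` of the standard basis of `Hom(Λ^{n-k} V, Λ^n V)`, and
`s ↦ sᶜ` is a bijection between the index sets: a basis goes to a basis up to units.
-/

open ExteriorAlgebra

/-- The `k`-th exterior power of `V`, realized as the `k`-th power of the submodule
`range (ι R)` inside the exterior algebra. -/
noncomputable abbrev extPow (R : Type*) [CommRing R] (V : Type*) [AddCommGroup V]
    [Module R V] (k : ℕ) : Submodule R (ExteriorAlgebra R V) :=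
  LinearMap.range (ι R : V →ₗ[R] ExteriorAlgebra R V) ^ k

/-- The linear map `Λ^k V → Hom(Λ^{n−k} V, Λ^n V)` induced by the wedge (algebra)
product, `x ↦ (y ↦ x ∧ y)`. -/
noncomputable def wedgePairingMap (R : Type*) [CommRing R] (V : Type*) [AddCommGroup V]
    [Module R V] (n k : ℕ) (hk : k ≤ n) :
    extPow R V k →ₗ[R] (extPow R V (n - k) →ₗ[R] extPow R V n) where
  toFun x :=
    { toFun := fun y => ⟨(x : ExteriorAlgebra R V) * (y : ExteriorAlgebra R V), by
        have hxy := Submodule.mul_mem_mul x.2 y.2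
        rwa [← pow_add, Nat.add_sub_cancel' hk] at hxy⟩
      map_add' := fun y z => Subtype.ext (by simp [mul_add])
      map_smul' := fun r y => Subtype.ext (by simp [mul_smul_comm]) }
  map_add' x y := LinearMap.ext fun z => Subtype.ext (by simp [add_mul])
  map_smul' r x := LinearMap.ext fun z => Subtype.ext (by simp [smul_mul_assoc])

theorem Module.Basis.bijective_of_apply_eq_unitsSMul {ι κ R M N : Type*} [CommSemiring R]
    [AddCommMonoid M] [Module R M] [AddCommMonoid N] [Module R N]
    (b : Module.Basis ι R M) (b' : Module.Basis κ R N) (σ : ι ≃ κ) (w : ι → Rˣ)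
    {f : M →ₗ[R] N} (hf : ∀ i, f (b i) = w i • b' (σ i)) : Function.Bijective f := by
  have : f = b.equiv ((b'.reindex σ.symm).unitsSMul w) (Equiv.refl ι) := b.ext fun i => by
    rw [hf, LinearEquiv.coe_coe, Basis.equiv_apply, Basis.unitsSMul_apply, Basis.reindex_apply,
      Equiv.refl_apply, Equiv.symm_symm]
  exact this ▸ LinearEquiv.bijective _

theorem Fin.coe_orderEmbedding_eq_id {n : ℕ} (f : Fin n ↪o Fin n) : ⇑f = id := by
  refine (f.strictMono.range_inj strictMono_id).mp ?_
  rw [(Finite.injective_iff_surjective.mp f.injective).range_eq, Set.range_id]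

namespace Set.powersetCard

abbrev uniqueOfCardEq {α : Type*} [Fintype α] {n : ℕ} (h : Fintype.card α = n) :
    Unique (powersetCard α n) where
  default := ofCard (s := Finset.univ) (by rw [Finset.card_univ, h])
  uniq s := Subtype.ext (Finset.eq_univ_of_card s.val ((card_eq s).trans h.symm))

theorem eq_compl_of_disjoint {α : Type*} [Fintype α] [DecidableEq α] {k m : ℕ}
    {hm : m + k = Fintype.card α} {s : powersetCard α k} {t : powersetCard α m}
    (h : Disjoint s.val t.val) : t = compl hm s := by
  rw [eq_iff_subset, coe_compl]
  exact fun a ha => Finset.mem_compl.mpr fun has => Finset.disjoint_left.mp h has ha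

end Set.powersetCard

open Set.powersetCard

namespace ExteriorAlgebra

variable {R M : Type*} [CommRing R] [AddCommGroup M] [Module R M]

theorem ιMulti_family_eq_ιMulti {m n : ℕ} (v : Fin n → M) (h : m = n)
    (s : Set.powersetCard (Fin n) m) : ιMulti_family R m v s = ιMulti R n v := by
  subst h
  rw [ιMulti_family, Fin.coe_orderEmbedding_eq_id, Function.comp_id]

theorem ιMulti_family_mul_compl {n k m : ℕ} (v : Fin n → M) (hm : m + k = Fintype.card (Fin n))
    (s : Set.powersetCard (Fin n) k) : ∃ ε : Rˣ,
    ιMulti_family R k v s * ιMulti_family R m v (compl hm s) = ε • ιMulti R n v := by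
  have h : Disjoint s.val (compl hm s).val :=
    Finset.disjoint_left.mpr fun _ has hac => Finset.mem_compl.mp hac has
  refine ⟨Units.map (Int.castRingHom R) (permOfDisjoint h).sign, ?_⟩
  rw [ιMulti_family_mul_of_disjoint R v s _ h,
    ιMulti_family_eq_ιMulti v (by rw [Fintype.card_fin] at hm; omega), Units.smul_def,
    Units.smul_def, Units.coe_map, MonoidHom.coe_coe, eq_intCast, Int.cast_smul_eq_zsmul]

end ExteriorAlgebra

theorem coe_wedgePairingMap_apply {R V : Type*} [CommRing R] [AddCommGroup V] [Module R V]
    {n k : ℕ} (hk : k ≤ n) (x : extPow R V k) (y : extPow R V (n - k)) :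
    (wedgePairingMap R V n k hk x y : ExteriorAlgebra R V) = x * y :=
  rfl

theorem exists_wedgePairingMap_basis_eq_smul {R V : Type*} [CommRing R] [AddCommGroup V]
    [Module R V] {n k : ℕ} (b : Module.Basis (Fin n) R V) (hk : k ≤ n)
    (hm : n - k + k = Fintype.card (Fin n)) (top : Set.powersetCard (Fin n) n)
    (s : Set.powersetCard (Fin n) k) : ∃ ε : Rˣ,
    wedgePairingMap R V n k hk (b.exteriorPower k s) =
      ε • (b.exteriorPower (n - k)).linearMap (b.exteriorPower n) (top, compl hm s) := by
  obtain ⟨ε, hε⟩ := ιMulti_family_mul_compl (R := R) b hm s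
  refine ⟨ε, (b.exteriorPower (n - k)).ext fun t => Subtype.ext ?_⟩
  rw [LinearMap.smul_apply, Module.Basis.linearMap_apply_apply, coe_wedgePairingMap_apply]
  simp only [exteriorPower.basis_apply, exteriorPower.ιMulti_family_apply_coe]
  split_ifs with hst
  · rw [← hst, hε, Units.smul_def, Units.smul_def, Submodule.coe_smul,
      exteriorPower.ιMulti_family_apply_coe, ιMulti_family_eq_ιMulti _ rfl]
  · rw [smul_zero, Submodule.coe_zero]
    exact ιMulti_family_mul_of_not_disjoint R b s t fun h => hst (eq_compl_of_disjoint h).symm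

theorem wedgePairing_bijective_general {R : Type*} [CommRing R]
    {V : Type*} [AddCommGroup V] [Module R V] {n : ℕ} (b : Module.Basis (Fin n) R V)
    (k : ℕ) (hk : k ≤ n) :
    Function.Bijective (wedgePairingMap R V n k hk) := by
  have hm : n - k + k = Fintype.card (Fin n) := by rw [Fintype.card_fin]; omega
  let := uniqueOfCardEq (Fintype.card_fin n)
  choose ε hε using exists_wedgePairingMap_basis_eq_smul b hk hm default
  exact (b.exteriorPower k).bijective_of_apply_eq_unitsSMul _
    ((compl hm).trans (Equiv.uniqueProd _ _).symm) ε hε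

/-- For a free module `V` of rank `n` over a nontrivial commutative ring, the wedge
product gives a perfect pairing: `Λ^k V → Hom(Λ^{n−k} V, Λ^n V)`, `x ↦ (y ↦ x ∧ y)`,
is an isomorphism of `R`-modules. -/
theorem wedgePairing_bijective {R : Type*} [CommRing R] [Nontrivial R]
    {V : Type*} [AddCommGroup V] [Module R V] {n : ℕ} (b : Module.Basis (Fin n) R V)
    (k : ℕ) (hk : k ≤ n) :
    Function.Bijective (wedgePairingMap R V n k hk) :=
  wedgePairing_bijective_general b k hk
end
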